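/- arXiv:2507.14122 — 4 statements merged into one kernel-verified Lean document; each statement's English description precedes it below -/
import Mathlib

section
/- One-step linear-combination bound for SGD (per-step form of Lemma 4.2): suppose γL ∈ (0,1) and set a := (1−γL)/(1+γL), b := −1, c := 2γL/(1+γL), and v := γσ_*²/(1−γL) (these are the constants a = 1 − γL(1+ε), c = γL(1+ε), v = γ(1+ε⁻¹)σ_*²/2 with ε = (1−γL)/(1+γL); note a + b + c = 0). Then for every x, z ∈ H, a·f(x) + b·f(z) + c·inf f ≤ (1/(2γ))‖x − z‖² − (1/(2γ)) E_{i∼D}[‖(x − γ∇f_i(x)) − z‖²] + v. -/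
/-!
Pointwise, for one convex `f` with `K`-Lipschitz gradient `g`: convexity gives
`f x - f z ≤ ⟪g x, x - z⟫`, and expanding the square shows that this inner product equals
`(‖x - z‖² - ‖x - γ g x - z‖²) / (2γ) + γ/2 ‖g x‖²`. Young's inequality
`‖g x‖² ≤ (1 + ε) ‖g x - g x⋆‖² + (1 + ε⁻¹) ‖g x⋆‖²` and cocoercivity
`‖g x - g x⋆‖² ≤ 2K (f x - f x⋆ - ⟪g x⋆, x - x⋆⟫)` then bound the last term.
Taking expectations, the linear term disappears because the mean gradient vanishes at a
minimiser of the mean; this follows from the descent lemma in expectation, without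
differentiating under the integral. With `ε = (1 - γL)/(1 + γL)` one gets the stated constants.
-/

open MeasureTheory Real Set
open scoped RealInnerProductSpace NNReal

theorem norm_add_sq_le_one_add_mul {E : Type*} [SeminormedAddCommGroup E] (u w : E) {ε : ℝ}
    (hε : 0 < ε) : ‖u + w‖ ^ 2 ≤ (1 + ε) * ‖u‖ ^ 2 + (1 + ε⁻¹) * ‖w‖ ^ 2 := by
  calc ‖u + w‖ ^ 2 ≤ (‖u‖ + ‖w‖) ^ 2 := by gcongr; exact norm_add_le u w
    _ = ‖u‖ ^ 2 + ‖w‖ ^ 2 + 2 * ‖u‖ * ‖w‖ := by ring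
    _ ≤ ‖u‖ ^ 2 + ‖w‖ ^ 2 + (ε * ‖u‖ ^ 2 + ε⁻¹ * ‖w‖ ^ 2) := by
      gcongr; exact two_mul_le_add_mul_sq hε
    _ = (1 + ε) * ‖u‖ ^ 2 + (1 + ε⁻¹) * ‖w‖ ^ 2 := by ring

section Smooth

variable {H : Type*} [NormedAddCommGroup H] [InnerProductSpace ℝ H] [CompleteSpace H]
  {f : H → ℝ} {g : H → H}

theorem HasGradientAt.hasDerivAt_comp_add_smul {f' x d : H} {t : ℝ}
    (hf : HasGradientAt f f' (x + t • d)) :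
    HasDerivAt (fun s : ℝ => f (x + s • d)) ⟪f', d⟫ t := by
  have hline : HasDerivAt (fun s : ℝ => x + s • d) d t := by
    simpa using ((hasDerivAt_id t).smul_const d).const_add x
  simpa [Function.comp_def] using hf.hasFDerivAt.comp_hasDerivAt t hline

theorem ConvexOn.add_inner_gradient_le (hf : ConvexOn ℝ univ f)
    (hg : ∀ p, HasGradientAt f (g p) p) (x y : H) : f x + ⟪g x, y - x⟫ ≤ f y := by
  have hline : ConvexOn ℝ univ (fun s : ℝ => f (x + s • (y - x))) := by
    simpa [Function.comp_def, AffineMap.lineMap_apply_module', add_comm] using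
      hf.comp_affineMap (AffineMap.lineMap x y : ℝ →ᵃ[ℝ] H)
  have hslope := hline.le_slope_of_hasDerivAt (mem_univ 0) (mem_univ 1) one_pos
    (hg (x + (0 : ℝ) • (y - x))).hasDerivAt_comp_add_smul
  simp only [zero_smul, add_zero, slope_def_field, one_smul, add_sub_cancel, sub_zero, div_one]
    at hslope
  linarith

theorem le_add_inner_gradient_add_sq {K : ℝ≥0} (hg : ∀ p, HasGradientAt f (g p) p)
    (hlip : LipschitzWith K g) (x y : H) :
    f y ≤ f x + ⟪g x, y - x⟫ + K / 2 * ‖y - x‖ ^ 2 := by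
  set d := y - x
  have hderiv (t : ℝ) := (hg (x + t • d)).hasDerivAt_comp_add_smul
  have hquad (t : ℝ) : HasDerivAt (fun s : ℝ => f x + s * ⟪g x, d⟫ + K / 2 * s ^ 2 * ‖d‖ ^ 2)
      (⟪g x, d⟫ + K * t * ‖d‖ ^ 2) t :=
    ((((hasDerivAt_id t).mul_const ⟪g x, d⟫).const_add (f x)).add
      (((hasDerivAt_pow 2 t).const_mul (K / 2 : ℝ)).mul_const (‖d‖ ^ 2))).congr_deriv (by
        simp only [one_mul, Nat.cast_ofNat]; ring)
  have hderiv_le (t : ℝ) (ht : t ∈ Ico (0 : ℝ) 1) :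
      ⟪g (x + t • d), d⟫ ≤ ⟪g x, d⟫ + K * t * ‖d‖ ^ 2 := by
    have hdist : ‖g (x + t • d) - g x‖ ≤ K * (t * ‖d‖) := by
      simpa [dist_eq_norm, norm_smul, abs_of_nonneg ht.1] using hlip.dist_le_mul (x + t • d) x
    calc ⟪g (x + t • d), d⟫ = ⟪g x, d⟫ + ⟪g (x + t • d) - g x, d⟫ := by
          rw [inner_sub_left]; ring
      _ ≤ ⟪g x, d⟫ + ‖g (x + t • d) - g x‖ * ‖d‖ := by gcongr; exact real_inner_le_norm _ _
      _ ≤ ⟪g x, d⟫ + K * (t * ‖d‖) * ‖d‖ := by gcongr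
      _ = ⟪g x, d⟫ + K * t * ‖d‖ ^ 2 := by ring
  have key := image_le_of_deriv_right_le_deriv_boundary
    (fun t _ => (hderiv t).continuousAt.continuousWithinAt) (fun t _ => (hderiv t).hasDerivWithinAt)
    (by simp) (fun t _ => (hquad t).continuousAt.continuousWithinAt)
    (fun t _ => (hquad t).hasDerivWithinAt) hderiv_le (right_mem_Icc.2 zero_le_one)
  simpa [d] using key

theorem HasGradientAt.sub_inner_const {f' p : H} (hf : HasGradientAt f f' p) (c : H) :
    HasGradientAt (fun w => f w - ⟪c, w⟫) (f' - c) p := by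
  rw [hasGradientAt_iff_hasFDerivAt, map_sub]
  exact hf.hasFDerivAt.sub (InnerProductSpace.toDual ℝ H c).hasFDerivAt

theorem ConvexOn.norm_sub_gradient_sq_le {K : ℝ≥0} (hf : ConvexOn ℝ univ f)
    (hg : ∀ p, HasGradientAt f (g p) p) (hlip : LipschitzWith K g) (x y : H) :
    ‖g x - g y‖ ^ 2 ≤ 2 * K * (f x - f y - ⟪g y, x - y⟫) := by
  obtain rfl | hK := eq_zero_or_pos K
  · simp [norm_sub_eq_zero_iff.2 (by simpa using hlip.dist_le_mul x y)]
  set u := g x - g y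
  set h : H → ℝ := fun w => f w - ⟪g y, w⟫
  have hgh (p : H) := (hg p).sub_inner_const (g y)
  have hh : ConvexOn ℝ univ h := hf.sub ((innerₛₗ ℝ (g y)).concaveOn convex_univ)
  have hmin (w : H) : h y ≤ h w := by simpa using hh.add_inner_gradient_le hgh y w
  have hlipu : LipschitzWith K (fun p => g p - g y) := by
    simpa using hlip.sub (LipschitzWith.const (g y))
  have hK' : (0 : ℝ) < K := hK
  have hdescent : h (x - (K : ℝ)⁻¹ • u) ≤ h x - ‖u‖ ^ 2 / (2 * K) :=
    calc h (x - (K : ℝ)⁻¹ • u)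
        ≤ h x + ⟪u, -((K : ℝ)⁻¹ • u)⟫ + K / 2 * ‖-((K : ℝ)⁻¹ • u)‖ ^ 2 := by
          simpa only [sub_sub_cancel_left] using
            le_add_inner_gradient_add_sq hgh hlipu x (x - (K : ℝ)⁻¹ • u)
      _ = h x - ‖u‖ ^ 2 / (2 * K) := by
          rw [inner_neg_right, norm_neg, real_inner_smul_right, real_inner_self_eq_norm_sq,
            norm_smul, Real.norm_eq_abs, abs_inv, abs_of_pos hK']
          field_simp
          ring
  have hstep : h x - h y = f x - f y - ⟪g y, x - y⟫ := by
    simp only [h, inner_sub_right]; ring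
  have hgap := (hmin _).trans hdescent
  rw [← hstep]
  field_simp at hgap ⊢
  linarith

theorem ConvexOn.sub_le_of_gradient_step {K : ℝ≥0} (hf : ConvexOn ℝ univ f)
    (hg : ∀ p, HasGradientAt f (g p) p) (hlip : LipschitzWith K g) {γ ε : ℝ} (hγ : 0 < γ)
    (hε : 0 < ε) (x y z : H) :
    f x - f z - γ * K * (1 + ε) * (f x - f y - ⟪g y, x - y⟫) ≤
      (‖x - z‖ ^ 2 - ‖x - γ • g x - z‖ ^ 2) / (2 * γ) + γ * (1 + ε⁻¹) / 2 * ‖g y‖ ^ 2 := by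
  have hfirst_order : f x - f z ≤ ⟪g x, x - z⟫ := by
    have hle := hf.add_inner_gradient_le hg x z
    rw [← neg_sub x z, inner_neg_right] at hle
    linarith
  have hexpand : (‖x - z‖ ^ 2 - ‖x - γ • g x - z‖ ^ 2) / (2 * γ) =
      ⟪g x, x - z⟫ - γ / 2 * ‖g x‖ ^ 2 := by
    rw [sub_right_comm, norm_sub_sq_real (x - z), real_inner_smul_right, norm_smul,
      Real.norm_eq_abs, abs_of_pos hγ, real_inner_comm]
    field_simp
    ring
  have hgrad_sq : ‖g x‖ ^ 2 ≤
      (1 + ε) * (2 * K * (f x - f y - ⟪g y, x - y⟫)) + (1 + ε⁻¹) * ‖g y‖ ^ 2 :=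
    calc ‖g x‖ ^ 2 = ‖(g x - g y) + g y‖ ^ 2 := by rw [sub_add_cancel]
      _ ≤ (1 + ε) * ‖g x - g y‖ ^ 2 + (1 + ε⁻¹) * ‖g y‖ ^ 2 := norm_add_sq_le_one_add_mul _ _ hε
      _ ≤ _ := by gcongr; exact hf.norm_sub_gradient_sq_le hg hlip x y
  rw [hexpand]
  linarith [mul_le_mul_of_nonneg_left hgrad_sq (by positivity : 0 ≤ γ / 2)]

end Smooth

theorem MeasureTheory.MemLp.of_lipschitzWith {α ι E : Type*} [PseudoMetricSpace α]
    [MeasurableSpace ι] [NormedAddCommGroup E] {μ : Measure ι} [IsFiniteMeasure μ] {p : ENNReal}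
    {K : ℝ≥0} {g : ι → α → E} (hlip : ∀ i, LipschitzWith K (g i)) {x y : α}
    (hx : AEStronglyMeasurable (fun i => g i x) μ) (hy : MemLp (fun i => g i y) p μ) :
    MemLp (fun i => g i x) p μ := by
  have hdiff : MemLp (fun i => g i x - g i y) p μ :=
    .of_bound (hx.sub hy.aestronglyMeasurable) (K * dist x y)
      (.of_forall fun i => by simpa [dist_eq_norm] using (hlip i).dist_le_mul x y)
  simpa [Pi.add_def] using hdiff.add hy

section Expectation

variable {H : Type*} [NormedAddCommGroup H] [InnerProductSpace ℝ H] [CompleteSpace H]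
  {ι : Type*} [MeasurableSpace ι] {μ : Measure ι} {f : ι → H → ℝ} {g : ι → H → H} {K : ℝ≥0}

theorem integral_gradient_eq_zero_of_forall_integral_le [IsFiniteMeasure μ]
    (hg : ∀ i p, HasGradientAt (f i) (g i p) p) (hlip : ∀ i, LipschitzWith K (g i))
    (hfint : ∀ x, Integrable (fun i => f i x) μ) {x₀ : H}
    (hgint : Integrable (fun i => g i x₀) μ)
    (hmin : ∀ y, ∫ i, f i x₀ ∂μ ≤ ∫ i, f i y ∂μ) :
    ∫ i, g i x₀ ∂μ = 0 := by
  have hdescent (w : H) : ∫ i, f i (x₀ + w) ∂μ ≤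
      ∫ i, f i x₀ ∂μ + ⟪∫ i, g i x₀ ∂μ, w⟫ + μ.real univ * (K / 2 * ‖w‖ ^ 2) := by
    have hint : Integrable (fun i => f i x₀ + ⟪g i x₀, w⟫) μ :=
      (hfint x₀).add (hgint.inner_const w)
    calc ∫ i, f i (x₀ + w) ∂μ
        ≤ ∫ i, (f i x₀ + ⟪g i x₀, w⟫ + K / 2 * ‖w‖ ^ 2) ∂μ :=
          integral_mono (hfint _) (hint.add (integrable_const _)) fun i => by
            simpa using le_add_inner_gradient_add_sq (hg i) (hlip i) x₀ (x₀ + w)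
      _ = _ := by
          rw [integral_add hint (integrable_const _), integral_add (hfint x₀)
            (hgint.inner_const w), integral_const, smul_eq_mul]
          simp_rw [real_inner_comm w, integral_inner hgint]
  set G := ∫ i, g i x₀ ∂μ
  -- nonnegative for every `t`, so its discriminant `‖G‖ ^ 4` is `≤ 0`
  have hquad (t : ℝ) :
      0 ≤ μ.real univ * K / 2 * ‖G‖ ^ 2 * (t * t) + ‖G‖ ^ 2 * t + 0 := by
    have hle := (hmin (x₀ + t • G)).trans (hdescent (t • G))
    rw [real_inner_smul_right, real_inner_self_eq_norm_sq, norm_smul, Real.norm_eq_abs, mul_pow,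
      sq_abs] at hle
    linarith
  have hdiscrim := discrim_le_zero hquad
  rw [discrim] at hdiscrim
  simpa using hdiscrim

theorem integral_sub_le_of_gradient_step [IsProbabilityMeasure μ]
    (hf : ∀ i, ConvexOn ℝ univ (f i)) (hg : ∀ i p, HasGradientAt (f i) (g i p) p)
    (hlip : ∀ i, LipschitzWith K (g i)) (hfint : ∀ x, Integrable (fun i => f i x) μ)
    {x y z : H} (hx : MemLp (fun i => g i x) 2 μ) (hy : MemLp (fun i => g i y) 2 μ)
    (hmean : ∫ i, g i y ∂μ = 0) {γ ε : ℝ} (hγ : 0 < γ) (hε : 0 < ε) :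
    ∫ i, f i x ∂μ - ∫ i, f i z ∂μ - γ * K * (1 + ε) * (∫ i, f i x ∂μ - ∫ i, f i y ∂μ) ≤
      (‖x - z‖ ^ 2 - ∫ i, ‖x - γ • g i x - z‖ ^ 2 ∂μ) / (2 * γ) +
        γ * (1 + ε⁻¹) / 2 * ∫ i, ‖g i y‖ ^ 2 ∂μ := by
  have hfx := hfint x
  have hfy := hfint y
  have hfz := hfint z
  have hyint : Integrable (fun i => g i y) μ := hy.integrable one_le_two
  have hinner : Integrable (fun i => ⟪g i y, x - y⟫) μ := hyint.inner_const _
  have hinner_zero : ∫ i, ⟪g i y, x - y⟫ ∂μ = 0 := by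
    simp_rw [real_inner_comm (x - y)]
    rw [integral_inner hyint, hmean, inner_zero_right]
  have hstep_sq : Integrable (fun i => ‖x - γ • g i x - z‖ ^ 2) μ :=
    (((memLp_const x).sub (hx.const_smul γ)).sub (memLp_const z)).integrable_norm_pow two_ne_zero
  have hy_sq : Integrable (fun i => ‖g i y‖ ^ 2) μ := hy.integrable_norm_pow two_ne_zero
  have key := integral_mono (by fun_prop) (by fun_prop)
    fun i => (hf i).sub_le_of_gradient_step (hg i) (hlip i) hγ hε x y z
  rw [integral_sub (by fun_prop) (by fun_prop), integral_sub hfx hfz, integral_const_mul,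
    integral_sub (by fun_prop) hinner, integral_sub hfx hfy, hinner_zero, sub_zero] at key
  rw [integral_add (by fun_prop) (by fun_prop), integral_div,
    integral_sub (integrable_const _) hstep_sq, integral_const, integral_const_mul] at key
  simpa using key

end Expectation

theorem sgd_one_step_linear_combination_general
    {H : Type*} [NormedAddCommGroup H] [InnerProductSpace ℝ H] [CompleteSpace H]
    {ι : Type*} [MeasurableSpace ι] (D : Measure ι) [IsProbabilityMeasure D]
    (f : ι → H → ℝ) (g : ι → H → H)
    (hgrad : ∀ i x, HasGradientAt (f i) (g i x) x)
    (hfint : ∀ x, Integrable (fun i => f i x) D)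
    (hgmeas : ∀ x, AEStronglyMeasurable (fun i => g i x) D)
    (F : H → ℝ) (hF : ∀ x, F x = ∫ i, f i x ∂D)
    (hconv : ∀ i, ConvexOn ℝ Set.univ (f i))
    (L : ℝ) (hL : 0 < L) (hlip : ∀ i, LipschitzWith L.toNNReal (g i))
    (xstar : H) (hmin : ∀ y, F xstar ≤ F y)
    (σ2 : ℝ) (hσ2 : σ2 = ∫ i, ‖g i xstar‖ ^ 2 ∂D)
    (hσint : Integrable (fun i => ‖g i xstar‖ ^ 2) D)
    (γ : ℝ) (hγ0 : 0 < γ) (hγL : γ * L < 1)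
    (a b c v : ℝ)
    (ha : a = (1 - γ * L) / (1 + γ * L)) (hb : b = -1)
    (hc : c = 2 * γ * L / (1 + γ * L)) (hv : v = γ * σ2 / (1 - γ * L)) :
    ∀ x z : H,
      a * F x + b * F z + c * F xstar ≤
        (1 / (2 * γ)) * ‖x - z‖ ^ 2 -
          (1 / (2 * γ)) * (∫ i, ‖(x - γ • g i x) - z‖ ^ 2 ∂D) + v := by
  intro x z
  have hstar : MemLp (fun i => g i xstar) 2 D :=
    (memLp_two_iff_integrable_sq_norm (hgmeas xstar)).2 hσint
  have hmean : ∫ i, g i xstar ∂D = 0 :=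
    integral_gradient_eq_zero_of_forall_integral_le hgrad hlip hfint
      (hstar.integrable one_le_two) fun y => by simpa only [hF] using hmin y
  have hγL₀ : 0 < γ * L := mul_pos hγ0 hL
  have hminus : 0 < 1 - γ * L := by linarith
  have hplus : 0 < 1 + γ * L := by linarith
  have hε : 0 < (1 - γ * L) / (1 + γ * L) := div_pos hminus hplus
  have key := integral_sub_le_of_gradient_step hconv hgrad hlip hfint
    (.of_lipschitzWith hlip (hgmeas x) hstar) hstar hmean (z := z) hγ0 hε
  have hcε : γ * L * (1 + (1 - γ * L) / (1 + γ * L)) = c := by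
    rw [hc]; field_simp; ring
  have hvε : γ * (1 + ((1 - γ * L) / (1 + γ * L))⁻¹) / 2 * σ2 = v := by
    rw [hv, inv_div]; field_simp; ring
  have hac : a = 1 - c := by
    rw [ha, hc]; field_simp; ring
  rw [Real.coe_toNNReal L hL.le, hcε, ← hσ2, hvε, ← hF, ← hF, ← hF] at key
  rw [hac, hb, ← mul_sub, one_div_mul_eq_div]
  linarith

/-- One-step linear-combination bound for SGD (per-step form of Lemma 4.2), with
`a = (1-γL)/(1+γL)`, `b = -1`, `c = 2γL/(1+γL)`, `v = γσ_*²/(1-γL)`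
(and `inf f = F x_*` since `x_*` is a minimizer). -/
theorem sgd_one_step_linear_combination
    {H : Type*} [NormedAddCommGroup H] [InnerProductSpace ℝ H] [CompleteSpace H]
    {ι : Type*} [MeasurableSpace ι] (D : Measure ι) [IsProbabilityMeasure D]
    (f : ι → H → ℝ) (g : ι → H → H)
    (hgrad : ∀ i x, HasGradientAt (f i) (g i x) x)
    (hfmeas : ∀ x, Measurable fun i => f i x)
    (hfint : ∀ x, Integrable (fun i => f i x) D)
    (hgmeas : ∀ x, AEStronglyMeasurable (fun i => g i x) D)
    (F : H → ℝ) (hF : ∀ x, F x = ∫ i, f i x ∂D)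
    (hconv : ∀ i, ConvexOn ℝ Set.univ (f i))
    (L : ℝ) (hL : 0 < L) (hlip : ∀ i, LipschitzWith L.toNNReal (g i))
    (xstar : H) (hmin : ∀ y, F xstar ≤ F y)
    (σ2 : ℝ) (hσ2 : σ2 = ∫ i, ‖g i xstar‖ ^ 2 ∂D)
    (hσint : Integrable (fun i => ‖g i xstar‖ ^ 2) D)
    (γ : ℝ) (hγ0 : 0 < γ) (hγL : γ * L < 1)
    (a b c v : ℝ)
    (ha : a = (1 - γ * L) / (1 + γ * L)) (hb : b = -1)
    (hc : c = 2 * γ * L / (1 + γ * L)) (hv : v = γ * σ2 / (1 - γ * L)) :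
    ∀ x z : H,
      a * F x + b * F z + c * F xstar ≤
        (1 / (2 * γ)) * ‖x - z‖ ^ 2 -
          (1 / (2 * γ)) * (∫ i, ‖(x - γ • g i x) - z‖ ^ 2 ∂D) + v :=
  sgd_one_step_linear_combination_general D f g hgrad hfint hgmeas F hF hconv L hL hlip xstar hmin
    σ2 hσ2 hσint γ hγ0 hγL a b c v ha hb hc hv
end

section
/- Bounds on the Zamani weight sequence: let T ≥ 2 be a fixed integer and φ ∈ (0,1], and define (α_t)_{t=−1}^{T−1} by α_{−1} = 1 and α_t = ((T−t+1)/(T−t+φ)) · α_{t−1} for t = 0, …, T−1. Then α_{T−1} ≥ (T+1)^{1−φ}/2 and Σ_{t=0}^{T−1} α_t ≤ 2·(1 + (T^φ − 1)/φ) · α_{T−1}. -/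
open Real Finset

lemma zamani_key {φ : ℝ} (hφ0 : 0 < φ) (hφ1 : φ ≤ 1) {c : ℝ} (hc : 0 ≤ c) :
    ((c + 2) / (c + 1)) ^ (1 - φ) ≤ (c + 1) / (c + φ) := by
  have h1 : (0:ℝ) < c + 1 := by linarith
  have h2 : (0:ℝ) < c + φ := by linarith
  have hb : (c + 2) / (c + 1) = 1 + 1 / (c + 1) := by field_simp; ring
  have hs0 : (0:ℝ) ≤ 1 / (c + 1) := by positivity
  have hbern := rpow_one_add_le_one_add_mul_self (by linarith : (-1:ℝ) ≤ 1 / (c+1))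
    (by linarith : (0:ℝ) ≤ 1 - φ) (by linarith : (1:ℝ) - φ ≤ 1)
  rw [hb]
  refine hbern.trans ?_
  have he : 1 + (1 - φ) * (1 / (c + 1)) = (c + 2 - φ) / (c + 1) := by
    field_simp; ring
  rw [he, div_le_div_iff₀ h1 h2]
  nlinarith [sq_nonneg (φ - 1)]


lemma zamani_bern {φ : ℝ} (hφ0 : 0 < φ) (hφ1 : φ ≤ 1) {x : ℝ} (hx : 1 ≤ x) :
    φ * x ^ (φ - 1) ≤ x ^ φ - (x - 1) ^ φ := by
  have hx0 : (0:ℝ) < x := by linarith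
  have hs : (-1:ℝ) ≤ -(1/x) := by
    rw [neg_le_neg_iff]
    exact div_le_one_of_le₀ hx hx0.le
  have hbern := rpow_one_add_le_one_add_mul_self hs hφ0.le hφ1
  have e1 : 1 + -(1/x) = (x - 1) / x := by field_simp; ring
  rw [e1, div_rpow (by linarith) hx0.le] at hbern
  have hxφ : (0:ℝ) < x ^ φ := rpow_pos_of_pos hx0 φ
  have h2 := mul_le_mul_of_nonneg_left hbern hxφ.le
  rw [mul_div_cancel₀ _ hxφ.ne'] at h2
  have e3 : x ^ φ * (1 + φ * -(1/x)) = x ^ φ - φ * (x ^ φ / x) := by ring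
  rw [e3, ← rpow_sub_one hx0.ne' φ] at h2
  linarith

/-- Bounds on the Zamani weight sequence.  Here `α (t+1)` plays the role of `α_t`
in the paper (and `α 0 = 1` is `α_{-1}`), so `α T = α_{T-1}` and
`∑ t in range T, α (t+1) = ∑_{t=0}^{T-1} α_t`. -/
theorem zamani_weights_bounds
    (T : ℕ) (hT : 2 ≤ T) (φ : ℝ) (hφ0 : 0 < φ) (hφ1 : φ ≤ 1)
    (α : ℕ → ℝ) (hα0 : α 0 = 1)
    (hαrec : ∀ t < T, α (t + 1) = (((T : ℝ) - t + 1) / ((T : ℝ) - t + φ)) * α t) :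
    ((T : ℝ) + 1) ^ (1 - φ) / 2 ≤ α T ∧
      ∑ t ∈ Finset.range T, α (t + 1) ≤ 2 * (1 + ((T : ℝ) ^ φ - 1) / φ) * α T := by
  have hq0 : (0:ℝ) ≤ 1 - φ := by linarith
  -- positivity
  have hpos : ∀ t ≤ T, 0 < α t := by
    intro t
    induction t with
    | zero => intro _; rw [hα0]; norm_num
    | succ n ih =>
      intro h
      have hn : n < T := h
      have hc : (1:ℝ) ≤ (T:ℝ) - n := by
        have : (n:ℝ) + 1 ≤ T := by exact_mod_cast hn
        linarith
      rw [hαrec n hn]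
      exact mul_pos (div_pos (by linarith) (by linarith)) (ih hn.le)
  -- lower bound invariant
  have hlow : ∀ t ≤ T, (((T:ℝ) + 2) / ((T:ℝ) - t + 2)) ^ (1 - φ) ≤ α t := by
    intro t
    induction t with
    | zero =>
      intro _
      simp only [Nat.cast_zero, sub_zero, hα0]
      rw [div_self (by positivity), one_rpow]
    | succ n ih =>
      intro h
      have hn : n < T := h
      have hc : (1:ℝ) ≤ (T:ℝ) - n := by
        have : (n:ℝ) + 1 ≤ T := by exact_mod_cast hn
        linarith
      have hkey := zamani_key hφ0 hφ1 (c := (T:ℝ) - n) (by linarith)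
      rw [hαrec n hn]
      have e1 : ((T:ℝ) + 2) / ((T:ℝ) - (n+1 : ℕ) + 2)
          = (((T:ℝ) + 2) / ((T:ℝ) - n + 2)) * (((T:ℝ) - n + 2) / ((T:ℝ) - n + 1)) := by
        push_cast
        rw [div_mul_div_comm]
        rw [div_eq_div_iff (by linarith) (by positivity)]
        ring
      rw [e1, Real.mul_rpow (by positivity) (by positivity)]
      have hkey' : (((T:ℝ) - n + 2) / ((T:ℝ) - n + 1)) ^ (1-φ)
          ≤ ((T:ℝ) - n + 1) / ((T:ℝ) - n + φ) := by
        have := hkey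
        convert this using 3 <;> ring
      calc (((T:ℝ) + 2) / ((T:ℝ) - n + 2)) ^ (1-φ) * (((T:ℝ) - n + 2) / ((T:ℝ) - n + 1)) ^ (1-φ)
          ≤ α n * (((T:ℝ) - n + 1) / ((T:ℝ) - n + φ)) := by
            apply mul_le_mul (ih hn.le) hkey' (by positivity)
            exact (hpos n hn.le).le
        _ = ((T:ℝ) - n + 1) / ((T:ℝ) - n + φ) * α n := by ring
  have hupp : ∀ j < T, (((j:ℝ) + 2) / 2) ^ (1 - φ) * α (T - j) ≤ α T := by
    intro j
    induction j with
    | zero =>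
      intro _
      norm_num
    | succ n ih =>
      intro h
      have hn : n < T := Nat.lt_of_succ_lt h
      have ihn := ih hn
      have hrec := hαrec (T - (n+1)) (by omega)
      have e0 : T - (n+1) + 1 = T - n := by omega
      have e1 : ((T - (n+1) : ℕ) : ℝ) = (T:ℝ) - (n+1) := by
        rw [Nat.cast_sub (by omega)]; push_cast; ring
      rw [e0, e1] at hrec
      have e2 : (T:ℝ) - ((T:ℝ) - (n+1)) + 1 = (n:ℝ) + 2 := by ring
      have e3 : (T:ℝ) - ((T:ℝ) - (n+1)) + φ = (n:ℝ) + 1 + φ := by ring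
      rw [e2, e3] at hrec
      -- hrec : α (T - n) = ((n+2)/(n+1+φ)) * α (T - (n+1))
      have hA : 0 < α (T - (n+1)) := hpos _ (by omega)
      have hkey := zamani_key hφ0 hφ1 (c := (n:ℝ) + 1) (by positivity)
      -- ((n+3)/(n+2))^(1-φ) ≤ (n+2)/(n+1+φ)
      have hsplit : (((n:ℝ) + 1 + 2) / 2) ^ (1 - φ)
          = (((n:ℝ) + 2) / 2) ^ (1-φ) * (((n:ℝ)+1+2)/((n:ℝ)+1+1)) ^ (1-φ) := by
        rw [← Real.mul_rpow (by positivity) (by positivity)]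
        congr 1
        field_simp
        ring
      push_cast
      rw [hsplit]
      calc (((n:ℝ) + 2) / 2) ^ (1-φ) * (((n:ℝ)+1+2)/((n:ℝ)+1+1)) ^ (1-φ) * α (T - (n+1))
          ≤ (((n:ℝ) + 2) / 2) ^ (1-φ) * (((n:ℝ)+2)/((n:ℝ)+1+φ)) * α (T - (n+1)) := by
            apply mul_le_mul_of_nonneg_right _ hA.le
            apply mul_le_mul_of_nonneg_left _ (by positivity)
            have e4 : (n:ℝ)+2 = (n:ℝ)+1+1 := by ring
            rw [← e4] at hkey ⊢
            exact hkey
        _ = (((n:ℝ) + 2) / 2) ^ (1-φ) * α (T - n) := by rw [hrec]; ring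
        _ ≤ α T := ihn
  have hT0 : (0:ℝ) < T := by positivity
  have hαT : 0 < α T := hpos T le_rfl
  have hlowT : (((T:ℝ) + 2) / 2) ^ (1 - φ) ≤ α T := by
    have := hlow T le_rfl
    rwa [sub_self, zero_add] at this
  constructor
  · -- part 1
    have h1 : ((T:ℝ) + 1) ^ (1 - φ) / 2 ≤ ((T:ℝ) + 1) ^ (1-φ) / 2 ^ (1-φ) := by
      apply div_le_div_of_nonneg_left (by positivity) (by positivity)
      calc (2:ℝ) ^ (1-φ) ≤ 2 ^ (1:ℝ) := by
            apply rpow_le_rpow_of_exponent_le (by norm_num) (by linarith)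
        _ = 2 := rpow_one 2
    have h2 : ((T:ℝ) + 1) ^ (1-φ) / 2 ^ (1-φ) = (((T:ℝ)+1)/2) ^ (1-φ) := by
      rw [div_rpow (by positivity) (by norm_num)]
    have h3 : (((T:ℝ)+1)/2) ^ (1-φ) ≤ (((T:ℝ)+2)/2) ^ (1-φ) := by
      apply rpow_le_rpow (by positivity) (by linarith) hq0
    linarith
  · -- part 2
    have hterm : ∀ t < T, α (t + 1) ≤ 2 * (((T-1-t : ℕ):ℝ) + 1) ^ (φ - 1) * α T := by
      intro t ht
      have hj := hupp (T - 1 - t) (by omega)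
      have e1 : T - (T - 1 - t) = t + 1 := by omega
      rw [e1] at hj
      set j : ℕ := T - 1 - t with hjdef
      have hB : (0:ℝ) < (((j:ℝ) + 2) / 2) ^ (1 - φ) := by positivity
      rw [← le_div_iff₀' hB] at hj
      refine hj.trans ?_
      have hinv : ((((j:ℝ)+2)/2) ^ (1-φ))⁻¹ = (2/((j:ℝ)+2)) ^ (1-φ) := by
        rw [← Real.inv_rpow (by positivity), inv_div]
      have hc : ((j:ℝ)+1)^(φ-1) = (((j:ℝ)+1)^(1-φ))⁻¹ := by
        rw [← Real.rpow_neg (by positivity)]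
        congr 1
        ring
      have ha : (2:ℝ)^(1-φ) ≤ 2 := by
        calc (2:ℝ) ^ (1-φ) ≤ 2 ^ (1:ℝ) :=
              rpow_le_rpow_of_exponent_le (by norm_num) (by linarith)
          _ = 2 := rpow_one 2
      have hb : ((j:ℝ)+1)^(1-φ) ≤ ((j:ℝ)+2)^(1-φ) :=
        rpow_le_rpow (by positivity) (by linarith) hq0
      have hsc : (2/((j:ℝ)+2)) ^ (1-φ) ≤ 2 * ((j:ℝ)+1)^(φ-1) := by
        rw [div_rpow (by norm_num) (by positivity), hc, ← div_eq_mul_inv]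
        exact div_le_div₀ (by norm_num) ha (by positivity) hb
      calc α T / (((j:ℝ)+2)/2) ^ (1-φ) = ((((j:ℝ)+2)/2) ^ (1-φ))⁻¹ * α T := by
            rw [div_eq_mul_inv, mul_comm]
        _ = (2/((j:ℝ)+2)) ^ (1-φ) * α T := by rw [hinv]
        _ ≤ 2 * ((j:ℝ)+1)^(φ-1) * α T := mul_le_mul_of_nonneg_right hsc hαT.le
    have hsum : ∑ j ∈ Finset.range T, ((j:ℝ) + 1) ^ (φ-1) ≤ 1 + ((T:ℝ)^φ - 1)/φ := by
      obtain ⟨S, rfl⟩ : ∃ S, T = S + 1 := ⟨T - 1, by omega⟩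
      rw [Finset.sum_range_succ']
      have h0 : (((0:ℕ):ℝ) + 1) ^ (φ-1) = 1 := by norm_num
      rw [h0]
      have hmain : ∑ j ∈ Finset.range S, (((j+1 : ℕ):ℝ) + 1) ^ (φ-1)
          ≤ (((S:ℝ)+1)^φ - 1)/φ := by
        set g : ℕ → ℝ := fun i => (((i:ℝ)+1))^φ / φ with hg
        have hstep : ∀ j ∈ Finset.range S, (((j+1 : ℕ):ℝ) + 1) ^ (φ-1)
            ≤ g (j+1) - g j := by
          intro j _
          have hx : (1:ℝ) ≤ (j:ℝ) + 2 := by have := Nat.cast_nonneg (α := ℝ) j; linarith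
          have hb := zamani_bern hφ0 hφ1 hx
          have e5 : ((j:ℝ) + 2) - 1 = (j:ℝ) + 1 := by ring
          rw [e5] at hb
          have : (((j+1 : ℕ):ℝ) + 1) = (j:ℝ) + 2 := by push_cast; ring
          rw [this, hg]
          simp only []
          push_cast
          rw [div_sub_div_same, le_div_iff₀ hφ0]
          have e6 : ((j:ℝ) + 1 + 1) = (j:ℝ) + 2 := by ring
          rw [e6]
          linarith
        calc ∑ j ∈ Finset.range S, (((j+1 : ℕ):ℝ) + 1) ^ (φ-1)
            ≤ ∑ j ∈ Finset.range S, (g (j+1) - g j) := Finset.sum_le_sum hstep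
          _ = g S - g 0 := Finset.sum_range_sub g S
          _ = (((S:ℝ)+1)^φ - 1)/φ := by
              rw [hg]
              simp only []
              rw [Nat.cast_zero, zero_add, one_rpow, div_sub_div_same]
      push_cast at hmain ⊢
      linarith
    calc ∑ t ∈ Finset.range T, α (t+1)
        ≤ ∑ t ∈ Finset.range T, 2 * (((T-1-t : ℕ):ℝ) + 1) ^ (φ-1) * α T :=
          Finset.sum_le_sum (fun t ht => hterm t (Finset.mem_range.1 ht))
      _ = 2 * α T * ∑ t ∈ Finset.range T, (((T-1-t : ℕ):ℝ) + 1) ^ (φ-1) := by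
          rw [Finset.mul_sum]
          exact Finset.sum_congr rfl (fun t _ => by ring)
      _ = 2 * α T * ∑ j ∈ Finset.range T, ((j:ℝ) + 1) ^ (φ-1) := by
          congr 1
          exact Finset.sum_range_reflect (fun j => ((j:ℝ)+1)^(φ-1)) T
      _ ≤ 2 * α T * (1 + ((T:ℝ)^φ - 1)/φ) :=
          mul_le_mul_of_nonneg_left hsum (by positivity)
      _ = 2 * (1 + ((T:ℝ)^φ - 1)/φ) * α T := by ring
end

section
/- Two-sided power bounds for the Zamani weight sequence: let T ≥ 2 be a fixed integer and φ ∈ (0,1], and define (α_t)_{t=−1}^{T−1} by α_{−1} = 1 and α_t = ((T−t+1)/(T−t+φ)) · α_{t−1} for t = 0, …, T−1. Then for every t with 0 ≤ t ≤ T−1, ((T+1)/(T−t+1))^{1−φ} ≤ α_t ≤ ((T+2)/(T−t))^{1−φ}. -/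
/-!
With `s = 1 - φ ∈ [0, 1)` and `x = T - t`, the recursion multiplies `α` by `(x + 1) / (x + φ)`.
Bernoulli's inequality `(1 + h) ^ s ≤ 1 + s h` (for `h ≥ -1`) sandwiches this factor:
`((x + 2) / (x + 1)) ^ s ≤ (x + 1) / (x + φ) ≤ ((x + 1) / x) ^ s`.
Both outer factors are ratios of consecutive terms of the claimed power bounds, so the bounds
propagate from `α 0 = 1` by induction.
-/

open Real

theorem le_of_le_mul_of_mul_le {f g r : ℕ → ℝ} {n : ℕ} (hr : ∀ k < n, 0 ≤ r k)
    (hf : ∀ k < n, f (k + 1) ≤ r k * f k) (hg : ∀ k < n, r k * g k ≤ g (k + 1))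
    (h0 : f 0 ≤ g 0) : ∀ k ≤ n, f k ≤ g k := by
  intro k hk
  induction k with
  | zero => exact h0
  | succ k ih =>
    calc f (k + 1) ≤ r k * f k := hf k hk
      _ ≤ r k * g k := mul_le_mul_of_nonneg_left (ih (by omega)) (hr k hk)
      _ ≤ g (k + 1) := hg k hk

section BernoulliSandwich

variable {φ x : ℝ}

theorem add_two_div_add_one_rpow_le (hφ0 : 0 < φ) (hφ1 : φ ≤ 1) (hx : 0 ≤ x) :
    ((x + 2) / (x + 1)) ^ (1 - φ) ≤ (x + 1) / (x + φ) := by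
  have hx1 : 0 < x + 1 := by linarith
  calc ((x + 2) / (x + 1)) ^ (1 - φ) = (1 + 1 / (x + 1)) ^ (1 - φ) := by
        congr 1; field_simp; ring
    _ ≤ 1 + (1 - φ) * (1 / (x + 1)) :=
        rpow_one_add_le_one_add_mul_self (by linarith [show 0 < 1 / (x + 1) by positivity])
          (by linarith) (by linarith)
    _ = (x + 2 - φ) / (x + 1) := by field_simp; ring
    _ ≤ (x + 1) / (x + φ) := by
        rw [div_le_div_iff₀ hx1 (by linarith)]
        nlinarith [sq_nonneg (1 - φ)]

theorem div_add_one_rpow_le (hφ0 : 0 ≤ φ) (hφ1 : φ ≤ 1) (hx : 0 < x) :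
    (x / (x + 1)) ^ (1 - φ) ≤ (x + φ) / (x + 1) := by
  have hx1 : 0 < x + 1 := by linarith
  have h_ge : -1 ≤ -(1 / (x + 1)) := by
    rw [neg_le_neg_iff, div_le_one hx1]; linarith
  calc (x / (x + 1)) ^ (1 - φ) = (1 + -(1 / (x + 1))) ^ (1 - φ) := by
        congr 1; field_simp; ring
    _ ≤ 1 + (1 - φ) * -(1 / (x + 1)) :=
        rpow_one_add_le_one_add_mul_self h_ge (by linarith) (by linarith)
    _ = (x + φ) / (x + 1) := by field_simp; ring

theorem add_one_div_add_le_rpow (hφ0 : 0 ≤ φ) (hφ1 : φ ≤ 1) (hx : 0 < x) :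
    (x + 1) / (x + φ) ≤ ((x + 1) / x) ^ (1 - φ) := by
  rw [← inv_div x, inv_rpow (by positivity), ← inv_div (x + φ)]
  exact inv_anti₀ (by positivity) (div_add_one_rpow_le hφ0 hφ1 hx)

theorem rpow_div_add_one_le_mul (hφ0 : 0 < φ) (hφ1 : φ ≤ 1) (hx : 0 ≤ x) {c : ℝ}
    (hc : 0 ≤ c) :
    (c / (x + 1)) ^ (1 - φ) ≤ (x + 1) / (x + φ) * (c / (x + 2)) ^ (1 - φ) := by
  rw [show c / (x + 1) = c / (x + 2) * ((x + 2) / (x + 1)) by field_simp,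
    mul_rpow (by positivity) (by positivity), mul_comm]
  gcongr
  exact add_two_div_add_one_rpow_le hφ0 hφ1 hx

theorem mul_rpow_div_add_one_le (hφ0 : 0 ≤ φ) (hφ1 : φ ≤ 1) (hx : 0 < x) {c : ℝ}
    (hc : 0 ≤ c) :
    (x + 1) / (x + φ) * (c / (x + 1)) ^ (1 - φ) ≤ (c / x) ^ (1 - φ) := by
  rw [show c / x = c / (x + 1) * ((x + 1) / x) by field_simp,
    mul_rpow (by positivity) (by positivity), mul_comm]
  gcongr
  exact add_one_div_add_le_rpow hφ0 hφ1 hx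

end BernoulliSandwich

section ZamaniWeights

variable {T : ℕ} {φ : ℝ} {α : ℕ → ℝ}

theorem one_le_natCast_sub_natCast_of_lt {k : ℕ} (hk : k < T) : (1 : ℝ) ≤ T - k := by
  rw [le_sub_iff_add_le', ← Nat.cast_succ]
  exact_mod_cast hk

theorem zamani_factor_nonneg (hφ0 : 0 ≤ φ) {k : ℕ} (hk : k < T) :
    0 ≤ ((T : ℝ) - k + 1) / ((T : ℝ) - k + φ) := by
  have := one_le_natCast_sub_natCast_of_lt hk
  positivity

theorem rpow_div_le_of_zamani_rec (hφ0 : 0 < φ) (hφ1 : φ ≤ 1) (hα0 : α 0 = 1)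
    (hαrec : ∀ t < T, α (t + 1) = (((T : ℝ) - t + 1) / ((T : ℝ) - t + φ)) * α t) :
    ∀ k ≤ T, (((T : ℝ) + 1) / (T - k + 2)) ^ (1 - φ) ≤ α k := by
  refine le_of_le_mul_of_mul_le (fun k hk => zamani_factor_nonneg hφ0.le hk) (fun k hk => ?_)
    (fun k hk => (hαrec k hk).ge) ?_
  · convert rpow_div_add_one_le_mul hφ0 hφ1 (x := T - k)
      (by linarith [one_le_natCast_sub_natCast_of_lt hk]) (by positivity : (0 : ℝ) ≤ T + 1)
      using 3
    push_cast; ring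
  · rw [hα0, Nat.cast_zero, sub_zero]
    exact rpow_le_one (by positivity) (by rw [div_le_one (by positivity)]; simp) (by linarith)

theorem le_rpow_div_of_zamani_rec (hφ0 : 0 ≤ φ) (hφ1 : φ ≤ 1) (hα0 : α 0 = 1)
    (hαrec : ∀ t < T, α (t + 1) = (((T : ℝ) - t + 1) / ((T : ℝ) - t + φ)) * α t) :
    ∀ k ≤ T, α k ≤ (((T : ℝ) + 2) / (T - k + 1)) ^ (1 - φ) := by
  refine le_of_le_mul_of_mul_le (fun k hk => zamani_factor_nonneg hφ0 hk)
    (fun k hk => (hαrec k hk).le) (fun k hk => ?_) ?_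
  · convert mul_rpow_div_add_one_le hφ0 hφ1 (x := T - k)
      (by linarith [one_le_natCast_sub_natCast_of_lt hk]) (by positivity : (0 : ℝ) ≤ T + 2)
      using 3
    push_cast; ring
  · rw [hα0, Nat.cast_zero, sub_zero]
    exact one_le_rpow (by rw [le_div_iff₀ (by positivity)]; simp) (by linarith)

end ZamaniWeights

/-- `α (t + 1)` is the paper's `α_t`, and `α 0` its `α_{-1}`. -/
theorem zamani_weights_two_sided_bounds_general
    (T : ℕ) (φ : ℝ) (hφ0 : 0 < φ) (hφ1 : φ ≤ 1)
    (α : ℕ → ℝ) (hα0 : α 0 = 1)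
    (hαrec : ∀ t < T, α (t + 1) = (((T : ℝ) - t + 1) / ((T : ℝ) - t + φ)) * α t) :
    ∀ t < T,
      (((T : ℝ) + 1) / ((T : ℝ) - t + 1)) ^ (1 - φ) ≤ α (t + 1) ∧
        α (t + 1) ≤ (((T : ℝ) + 2) / ((T : ℝ) - t)) ^ (1 - φ) := by
  intro t ht
  have lower := rpow_div_le_of_zamani_rec hφ0 hφ1 hα0 hαrec (t + 1) ht
  have upper := le_rpow_div_of_zamani_rec hφ0.le hφ1 hα0 hαrec (t + 1) ht
  have hshift : (T : ℝ) - ((t + 1 : ℕ) : ℝ) = T - t - 1 := by push_cast; ring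
  rw [hshift] at lower upper
  constructor
  · convert lower using 3; ring
  · convert upper using 3; ring

/-- Two-sided power bounds for the Zamani weight sequence.
Here `α (t+1)` plays the role of `α_t` in the paper (and `α 0 = 1` is `α_{-1}`), so
for `0 ≤ t ≤ T-1`, `((T+1)/(T-t+1))^{1-φ} ≤ α_t ≤ ((T+2)/(T-t))^{1-φ}`. -/
theorem zamani_weights_two_sided_bounds
    (T : ℕ) (hT : 2 ≤ T) (φ : ℝ) (hφ0 : 0 < φ) (hφ1 : φ ≤ 1)
    (α : ℕ → ℝ) (hα0 : α 0 = 1)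
    (hαrec : ∀ t < T, α (t + 1) = (((T : ℝ) - t + 1) / ((T : ℝ) - t + φ)) * α t) :
    ∀ t < T,
      (((T : ℝ) + 1) / ((T : ℝ) - t + 1)) ^ (1 - φ) ≤ α (t + 1) ∧
        α (t + 1) ≤ (((T : ℝ) + 2) / ((T : ℝ) - t)) ^ (1 - φ) :=
  zamani_weights_two_sided_bounds_general T φ hφ0 hφ1 α hα0 hαrec
end

section
/- Variance is finite everywhere or nowhere: if there exists some x ∈ H with E_{i∼D}[‖∇f_i(x)‖²] < ∞, then E_{i∼D}[‖∇f_i(y)‖²] < ∞ for every y ∈ H. -/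
open MeasureTheory Real

/-- Variance is finite everywhere or nowhere: if `E‖∇f_i(x)‖² < ∞` for some `x`,
then `E‖∇f_i(y)‖² < ∞` for every `y`. -/
theorem variance_finite_everywhere_or_nowhere
    {H : Type*} [NormedAddCommGroup H] [InnerProductSpace ℝ H] [CompleteSpace H]
    {ι : Type*} [MeasurableSpace ι] (D : Measure ι) [IsProbabilityMeasure D]
    (f : ι → H → ℝ) (g : ι → H → H)
    (hgrad : ∀ i x, HasGradientAt (f i) (g i x) x)
    (hfmeas : ∀ x, Measurable fun i => f i x)
    (hfint : ∀ x, Integrable (fun i => f i x) D)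
    (hgmeas : ∀ x, AEStronglyMeasurable (fun i => g i x) D)
    (F : H → ℝ) (hF : ∀ x, F x = ∫ i, f i x ∂D)
    (hconv : ∀ i, ConvexOn ℝ Set.univ (f i))
    (L : ℝ) (hL : 0 < L) (hlip : ∀ i, LipschitzWith L.toNNReal (g i))
    (hx : ∃ x : H, Integrable (fun i => ‖g i x‖ ^ 2) D) :
    ∀ y : H, Integrable (fun i => ‖g i y‖ ^ 2) D := by
  obtain ⟨x, hx⟩ := hx
  intro y
  have hmeas : AEStronglyMeasurable (fun i => ‖g i y‖ ^ 2) D :=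
    ((hgmeas y).norm.pow 2)
  have hbound : Integrable (fun i => 2 * ‖g i x‖ ^ 2 + 2 * (L * ‖y - x‖) ^ 2) D :=
    (hx.const_mul 2).add (integrable_const _)
  refine hbound.mono' hmeas (Filter.Eventually.of_forall fun i => ?_)
  have hl : ‖g i y - g i x‖ ≤ L * ‖y - x‖ := by
    have := (hlip i).dist_le_mul y x
    rw [Real.coe_toNNReal _ hL.le] at this
    simpa [dist_eq_norm] using this
  have h1 : ‖g i y‖ ≤ ‖g i x‖ + L * ‖y - x‖ := by
    calc ‖g i y‖ = ‖g i x + (g i y - g i x)‖ := by congr 1; abel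
    _ ≤ ‖g i x‖ + ‖g i y - g i x‖ := norm_add_le _ _
    _ ≤ ‖g i x‖ + L * ‖y - x‖ := by linarith
  have h0 : (0:ℝ) ≤ ‖g i y‖ := norm_nonneg _
  rw [Real.norm_eq_abs, abs_of_nonneg (by positivity)]
  nlinarith [norm_nonneg (g i x), norm_nonneg (y - x), sq_nonneg (‖g i x‖ - L * ‖y - x‖)]
end
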